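/- Let ψ : ℝ² → ℂ² be a bounded smooth function with |ψ(x)| = c > 0 constant, satisfying (−iσ·∇ + mσ₃ − μ)ψ = 0, and let φ be a smooth cutoff with φ = 1 on [0,1/2], supp φ ⊂ [0,1]. For x_n ∈ ℝ² and n ≥ 1, set ψ_n(x) = ψ(x)·φ(|x − x_n|/n). Then ‖ψ_n‖²_{L²(ℝ²)} = c² n² ∫₀¹ r φ(r)² dr·2π and ‖(−iσ·∇ + mσ₃ − μ)ψ_n‖²_{L²(ℝ²)} = c²·2π ∫₀¹ r φ'(r)² dr; consequently ‖(−iσ·∇ + mσ₃ − μ)ψ_n‖/‖ψ_n‖ → 0 as n → ∞. -/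

import Mathlib

open Real Matrix MeasureTheory Filter
open Set

noncomputable section

abbrev E2 := EuclideanSpace ℝ (Fin 2)

def pauli1 : Matrix (Fin 2) (Fin 2) ℂ := !![0, 1; 1, 0]
def pauli2 : Matrix (Fin 2) (Fin 2) ℂ := !![0, -Complex.I; Complex.I, 0]
def pauli3 : Matrix (Fin 2) (Fin 2) ℂ := !![1, 0; 0, -1]

/-- The Dirac expression (−iσ·∇ + mσ₃ − μ) applied pointwise. -/
def diracExpr (m μ : ℝ) (F : E2 → Fin 2 → ℂ) (x : E2) : Fin 2 → ℂ :=
  (-Complex.I) • pauli1.mulVec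
      (fun i => fderiv ℝ (fun y => F y i) x (EuclideanSpace.single 0 1)) +
  (-Complex.I) • pauli2.mulVec
      (fun i => fderiv ℝ (fun y => F y i) x (EuclideanSpace.single 1 1)) +
  (m : ℂ) • pauli3.mulVec (F x) - (μ : ℂ) • F x

theorem radial_int (f : ℝ → ℝ) (a : EuclideanSpace ℝ (Fin 2)) :
    (∫ x : EuclideanSpace ℝ (Fin 2), f ‖x - a‖) =
      2 * π * ∫ y in Ioi (0:ℝ), y * f y := by
  rw [integral_sub_right_eq_self (fun x => f ‖x‖) a]
  rw [MeasureTheory.integral_fun_norm_addHaar volume f]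
  have hdim : Module.finrank ℝ (EuclideanSpace ℝ (Fin 2)) = 2 := finrank_euclideanSpace_fin
  rw [hdim]
  have hball : volume.real (Metric.ball (0 : EuclideanSpace ℝ (Fin 2)) 1) = π := by
    rw [measureReal_def, EuclideanSpace.volume_ball]
    have h2 : ((Fintype.card (Fin 2)) : ℝ) / 2 + 1 = 2 := by simp; norm_num
    rw [h2, Real.Gamma_two]
    simp [Real.sq_sqrt Real.pi_nonneg, ENNReal.toReal_ofReal Real.pi_nonneg]
  rw [hball]
  simp only [nsmul_eq_mul, smul_eq_mul, Nat.cast_ofNat, pow_one]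
  norm_num
  ring

theorem Ioi_to_Ioo (H : ℝ → ℝ) (hH : Continuous H) (h0 : ∀ r : ℝ, 1 < r → H r = 0) :
    ∫ y in Ioi (0:ℝ), H y = ∫ y in Ioo (0:ℝ) 1, H y := by
  have hsplit : Ioi (0:ℝ) = Ioo 0 1 ∪ Ici 1 := by
    ext x
    simp only [mem_Ioi, mem_union, mem_Ioo, mem_Ici]
    constructor
    · intro hx; rcases lt_or_ge x 1 with h | h
      · exact Or.inl ⟨hx, h⟩
      · exact Or.inr h
    · rintro (⟨h, _⟩ | h) <;> linarith
  have hdisj : Disjoint (Ioo (0:ℝ) 1) (Ici 1) := by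
    rw [Set.disjoint_left]; rintro x ⟨_, h1⟩ h2; exact absurd h2 (not_le.2 h1)
  have hint1 : IntegrableOn H (Ioo (0:ℝ) 1) := (hH.integrableOn_Icc).mono_set Ioo_subset_Icc_self
  have hioi : IntegrableOn H (Ioi (1:ℝ)) :=
    (integrableOn_zero).congr_fun (fun x hx => (h0 x hx).symm) measurableSet_Ioi
  have hint2 : IntegrableOn H (Ici (1:ℝ)) := by
    rwa [integrableOn_Ici_iff_integrableOn_Ioi]
  rw [hsplit, setIntegral_union hdisj measurableSet_Ici hint1 hint2,
    integral_Ici_eq_integral_Ioi]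
  have hz : ∫ t in Ioi (1:ℝ), H t = 0 :=
    setIntegral_eq_zero_of_forall_eq_zero fun x hx => h0 x hx
  rw [hz, add_zero]

theorem subst_lemma (H : ℝ → ℝ) (n : ℝ) (hn : 0 < n) :
    ∫ y in Ioi (0:ℝ), y * H (y / n) = n ^ 2 * ∫ y in Ioi (0:ℝ), y * H y := by
  have key : ∀ y : ℝ, y * H (y / n) = n * ((fun t => t * H t) (n⁻¹ * y)) := by
    intro y
    simp only
    rw [← div_eq_inv_mul]
    field_simp
  simp only [key]
  rw [integral_const_mul, integral_comp_mul_left_Ioi (fun t => t * H t) 0 (inv_pos.2 hn),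
    mul_zero, inv_inv, smul_eq_mul]
  ring

theorem hasFDerivAt_norm_e2 (v : E2) (hv : v ≠ 0) :
    HasFDerivAt (fun y : E2 => ‖y‖) (‖v‖⁻¹ • (innerSL ℝ v)) v := by
  have h1 : HasFDerivAt (fun y : E2 => ‖y‖ ^ 2) (2 • innerSL ℝ v) v :=
    (hasStrictFDerivAt_norm_sq v).hasFDerivAt
  have h2 := h1.sqrt (pow_ne_zero 2 (norm_ne_zero_iff.2 hv))
  have hfun : (fun y : E2 => Real.sqrt (‖y‖ ^ 2)) = fun y : E2 => ‖y‖ := by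
    funext y; exact Real.sqrt_sq (norm_nonneg y)
  rw [hfun] at h2
  rw [Real.sqrt_sq (norm_nonneg v)] at h2
  refine h2.congr_fderiv ?_
  ext w
  simp only [ContinuousLinearMap.smul_apply, smul_eq_mul, two_smul,
    ContinuousLinearMap.add_apply]
  have : ‖v‖ ≠ 0 := norm_ne_zero_iff.2 hv
  field_simp
  ring

theorem hasFDerivAt_cutoff (φ : ℝ → ℝ) (hφ : ContDiff ℝ (⊤ : ℕ∞) φ) (a x : E2) (n : ℝ)
    (hn : 0 < n) (hx : x ≠ a) :
    HasFDerivAt (fun y : E2 => φ (‖y - a‖ / n))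
      ((deriv φ (‖x - a‖ / n) * (n⁻¹ * ‖x - a‖⁻¹)) • innerSL ℝ (x - a)) x := by
  have hsub : HasFDerivAt (fun y : E2 => y - a) (ContinuousLinearMap.id ℝ E2) x :=
    (hasFDerivAt_id x).sub_const a
  have h1 := (hasFDerivAt_norm_e2 (x - a) (sub_ne_zero.2 hx)).comp x hsub
  rw [ContinuousLinearMap.comp_id] at h1
  simp only [Function.comp_def] at h1
  have h2 := h1.const_mul n⁻¹
  have h3 := ((hφ.differentiable (by simp)) (n⁻¹ * ‖x - a‖)).hasDerivAt.comp_hasFDerivAt x h2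
  simp only [div_eq_inv_mul]
  refine h3.congr_fderiv ?_
  ext w
  simp only [ContinuousLinearMap.smul_apply, smul_eq_mul]
  ring

theorem fderiv_comp_val (φ : ℝ → ℝ) (hφ : ContDiff ℝ (⊤ : ℕ∞) φ) (ψi : E2 → ℂ)
    (hψi : ContDiff ℝ (⊤ : ℕ∞) ψi) (a x : E2) (n : ℝ) (hn : 0 < n) (hx : x ≠ a) (j : Fin 2) :
    fderiv ℝ (fun y => (↑(φ (‖y - a‖ / n)) : ℂ) * ψi y) x (EuclideanSpace.single j 1) =
      ↑(deriv φ (‖x - a‖ / n) * (n⁻¹ * (‖x - a‖⁻¹ * (x - a) j))) * ψi x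
        + ↑(φ (‖x - a‖ / n)) * fderiv ℝ ψi x (EuclideanSpace.single j 1) := by
  have hg := hasFDerivAt_cutoff φ hφ a x n hn hx
  have hgc := Complex.ofRealCLM.hasFDerivAt.comp x hg
  have hψ := (hψi.differentiable (by simp) x).hasFDerivAt
  have hmul := hgc.mul hψ
  simp only [Function.comp_def, Complex.ofRealCLM_apply] at hmul
  rw [show (fun y => (↑(φ (‖y - a‖ / n)) : ℂ) * ψi y) = (fun y => (↑(φ (‖y - a‖ / n)) : ℂ)) * ψi from rfl, hmul.fderiv]
  have hinner : (innerSL ℝ (x - a)) (EuclideanSpace.single j (1:ℝ)) = (x - a) j := by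
    rw [innerSL_apply_apply, EuclideanSpace.inner_single_right]
    simp
  simp only [ContinuousLinearMap.add_apply, ContinuousLinearMap.coe_smul', Pi.smul_apply,
    ContinuousLinearMap.coe_comp', Function.comp_apply, ContinuousLinearMap.smul_apply,
    Complex.ofRealCLM_apply, hinner, smul_eq_mul, Complex.real_smul, Complex.ofReal_mul]
  ring


theorem dirac_cut_sq (m μ : ℝ) (ψ : E2 → Fin 2 → ℂ)
    (hsmooth : ∀ i, ContDiff ℝ (⊤ : ℕ∞) (fun x => ψ x i))
    (heq : ∀ x, diracExpr m μ ψ x = 0) (φ : ℝ → ℝ) (hφ : ContDiff ℝ (⊤ : ℕ∞) φ)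
    (a x : E2) (n : ℝ) (hn : 0 < n) (hx : x ≠ a) :
    ∑ i : Fin 2, ‖diracExpr m μ (fun y i => (↑(φ (‖y - a‖ / n)) : ℂ) * ψ y i) x i‖ ^ 2
      = (deriv φ (‖x - a‖ / n) / n) ^ 2 * ∑ i : Fin 2, ‖ψ x i‖ ^ 2 := by
  have hna : ‖x - a‖ ≠ 0 := norm_ne_zero_iff.2 (sub_ne_zero.2 hx)
  set t := ‖x - a‖ / n with ht
  set k := deriv φ t * (n⁻¹ * ‖x - a‖⁻¹) with hk
  set w : Fin 2 → ℝ := fun j => k * (x - a) j with hw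
  have hf : ∀ i j : Fin 2,
      fderiv ℝ (fun y => (↑(φ (‖y - a‖ / n)) : ℂ) * ψ y i) x (EuclideanSpace.single j 1)
        = ↑(w j) * ψ x i + ↑(φ t) * fderiv ℝ (fun y => ψ y i) x (EuclideanSpace.single j 1) := by
    intro i j
    rw [fderiv_comp_val φ hφ (fun y => ψ y i) (hsmooth i) a x n hn hx j]
    simp only [hw, hk, ht, Complex.ofReal_mul]
    ring
  have h0 := congrFun (heq x) 0
  have h1 := congrFun (heq x) 1
  simp only [diracExpr, pauli1, pauli2, pauli3, Matrix.mulVec, dotProduct,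
    Fin.sum_univ_two, Pi.add_apply, Pi.sub_apply, Pi.smul_apply, smul_eq_mul,
    Matrix.of_apply, Matrix.cons_val', Matrix.cons_val_zero, Matrix.cons_val_one,
    Matrix.head_cons, Matrix.empty_val', Matrix.cons_val_fin_one, Matrix.head_fin_const,
    Pi.zero_apply, zero_mul, one_mul, mul_zero, add_zero, zero_add, neg_mul, mul_neg,
    neg_neg] at h0 h1
  have c0 : diracExpr m μ (fun y i => (↑(φ (‖y - a‖ / n)) : ℂ) * ψ y i) x 0
      = (-(↑(w 0) * Complex.I) - ↑(w 1)) * ψ x 1 := by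
    simp only [diracExpr, pauli1, pauli2, pauli3, Matrix.mulVec, dotProduct,
      Fin.sum_univ_two, Pi.add_apply, Pi.sub_apply, Pi.smul_apply, smul_eq_mul,
      Matrix.of_apply, Matrix.cons_val', Matrix.cons_val_zero, Matrix.cons_val_one,
      Matrix.head_cons, Matrix.empty_val', Matrix.cons_val_fin_one, Matrix.head_fin_const,
      Pi.zero_apply, zero_mul, one_mul, mul_zero, add_zero, zero_add, neg_mul, mul_neg,
      neg_neg]
    rw [hf 1 0, hf 1 1]
    rw [← ht]
    linear_combination (↑(φ t) : ℂ) * h0 + (ψ x 1 * ↑(w 1)) * Complex.I_sq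
  have c1 : diracExpr m μ (fun y i => (↑(φ (‖y - a‖ / n)) : ℂ) * ψ y i) x 1
      = (-(↑(w 0) * Complex.I) + ↑(w 1)) * ψ x 0 := by
    simp only [diracExpr, pauli1, pauli2, pauli3, Matrix.mulVec, dotProduct,
      Fin.sum_univ_two, Pi.add_apply, Pi.sub_apply, Pi.smul_apply, smul_eq_mul,
      Matrix.of_apply, Matrix.cons_val', Matrix.cons_val_zero, Matrix.cons_val_one,
      Matrix.head_cons, Matrix.empty_val', Matrix.cons_val_fin_one, Matrix.head_fin_const,
      Pi.zero_apply, zero_mul, one_mul, mul_zero, add_zero, zero_add, neg_mul, mul_neg,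
      neg_neg]
    rw [hf 0 0, hf 0 1]
    rw [← ht]
    linear_combination (↑(φ t) : ℂ) * h1 + (-(ψ x 0 * ↑(w 1))) * Complex.I_sq
  rw [Fin.sum_univ_two, Fin.sum_univ_two, c0, c1]
  simp only [norm_mul, mul_pow]
  have habs0 : ‖-(↑(w 0) * Complex.I) - ↑(w 1)‖ ^ 2 = w 0 ^ 2 + w 1 ^ 2 := by
    rw [Complex.sq_norm]
    simp [Complex.normSq_apply]
    ring
  have habs1 : ‖-(↑(w 0) * Complex.I) + ↑(w 1)‖ ^ 2 = w 0 ^ 2 + w 1 ^ 2 := by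
    rw [Complex.sq_norm]
    simp [Complex.normSq_apply]
    ring
  rw [habs0, habs1]
  have hns : (x - a) 0 ^ 2 + (x - a) 1 ^ 2 = ‖x - a‖ ^ 2 := by
    rw [EuclideanSpace.norm_eq, Real.sq_sqrt (by positivity)]
    simp [Fin.sum_univ_two, sq_abs]
  have hwsum : w 0 ^ 2 + w 1 ^ 2 = (deriv φ t / n) ^ 2 := by
    simp only [hw, hk]
    have : (deriv φ t * (n⁻¹ * ‖x - a‖⁻¹) * (x - a) 0) ^ 2
        + (deriv φ t * (n⁻¹ * ‖x - a‖⁻¹) * (x - a) 1) ^ 2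
        = (deriv φ t * (n⁻¹ * ‖x - a‖⁻¹)) ^ 2 * ((x - a) 0 ^ 2 + (x - a) 1 ^ 2) := by ring
    rw [this, hns]
    field_simp
  rw [hwsum]
  ring

theorem dirac_cut_sq_all (m μ : ℝ) (ψ : E2 → Fin 2 → ℂ)
    (hsmooth : ∀ i, ContDiff ℝ (⊤ : ℕ∞) (fun x => ψ x i))
    (heq : ∀ x, diracExpr m μ ψ x = 0) (φ : ℝ → ℝ) (hφ : ContDiff ℝ (⊤ : ℕ∞) φ)
    (hφ1 : ∀ r : ℝ, r ≤ 1/2 → φ r = 1) (a : E2) (n : ℝ) (hn : 0 < n) (x : E2) :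
    ∑ i : Fin 2, ‖diracExpr m μ (fun y i => (↑(φ (‖y - a‖ / n)) : ℂ) * ψ y i) x i‖ ^ 2
      = (deriv φ (‖x - a‖ / n) / n) ^ 2 * ∑ i : Fin 2, ‖ψ x i‖ ^ 2 := by
  rcases lt_or_ge ‖x - a‖ (n / 2) with hnear | hfar
  · have hmem : x ∈ Metric.ball a (n / 2) := by
      rw [Metric.mem_ball, dist_eq_norm]; exact hnear
    have hev : ∀ᶠ y in nhds x, φ (‖y - a‖ / n) = 1 := by
      filter_upwards [Metric.isOpen_ball.mem_nhds hmem] with y hy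
      rw [Metric.mem_ball, dist_eq_norm] at hy
      exact hφ1 _ (by rw [div_le_div_iff₀ hn (by norm_num : (0:ℝ) < 2)]; linarith)
    have hevi : ∀ i : Fin 2, (fun y => (↑(φ (‖y - a‖ / n)) : ℂ) * ψ y i)
        =ᶠ[nhds x] fun y => ψ y i := by
      intro i
      filter_upwards [hev] with y hy
      rw [hy, Complex.ofReal_one, one_mul]
    have hfd : ∀ i : Fin 2, fderiv ℝ (fun y => (↑(φ (‖y - a‖ / n)) : ℂ) * ψ y i) x
        = fderiv ℝ (fun y => ψ y i) x := fun i => (hevi i).fderiv_eq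
    have hFx : (fun i : Fin 2 => (↑(φ (‖x - a‖ / n)) : ℂ) * ψ x i) = ψ x := by
      funext i
      rw [hev.self_of_nhds, Complex.ofReal_one, one_mul]
    have hD : diracExpr m μ (fun y i => (↑(φ (‖y - a‖ / n)) : ℂ) * ψ y i) x = 0 := by
      rw [← heq x]
      simp only [diracExpr, hfd, hFx]
    have hderiv0 : deriv φ (‖x - a‖ / n) = 0 := by
      have : φ =ᶠ[nhds (‖x - a‖ / n)] fun _ => 1 := by
        filter_upwards [Iio_mem_nhds (show ‖x - a‖ / n < 1/2 by
          rw [div_lt_div_iff₀ hn (by norm_num : (0:ℝ) < 2)]; linarith)] with r hr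
        exact hφ1 r (le_of_lt hr)
      rw [this.deriv_eq, deriv_const]
    rw [hD, hderiv0]
    simp
  · have hx : x ≠ a := by
      intro h
      rw [h, sub_self, norm_zero] at hfar
      linarith
    exact dirac_cut_sq m μ ψ hsmooth heq φ hφ a x n hn hx

/-- The Weyl-sequence computation: for ψ a generalized eigenfunction of constant pointwise
norm c and ψ_n = ψ·φ(|x−x_n|/n), the L² norms are explicit and the Rayleigh quotient of
the Dirac expression tends to 0. -/
theorem weyl_sequence (m μ c : ℝ) (hm : 0 ≤ m) (hc : 0 < c)
    (ψ : E2 → Fin 2 → ℂ) (hsmooth : ∀ i, ContDiff ℝ (⊤ : ℕ∞) (fun x => ψ x i))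
    (hnorm : ∀ x, Real.sqrt (∑ i : Fin 2, ‖ψ x i‖ ^ 2) = c)
    (heq : ∀ x, diracExpr m μ ψ x = 0)
    (φ : ℝ → ℝ) (hφ : ContDiff ℝ (⊤ : ℕ∞) φ) (hφ1 : ∀ r : ℝ, r ≤ 1/2 → φ r = 1)
    (hφ0 : ∀ r : ℝ, 1 ≤ r → φ r = 0)
    (xseq : ℕ → E2)
    (ψn : ℕ → E2 → Fin 2 → ℂ)
    (hψn : ∀ n x, ψn n x = fun i => (φ (‖x - xseq n‖ / n) : ℂ) * ψ x i) :
    (∀ n : ℕ, 1 ≤ n →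
      (∫ x : E2, ∑ i : Fin 2, ‖ψn n x i‖ ^ 2) =
        c ^ 2 * (n : ℝ) ^ 2 * (∫ r in Set.Ioo (0:ℝ) 1, r * φ r ^ 2) * (2 * Real.pi)) ∧
    (∀ n : ℕ, 1 ≤ n →
      (∫ x : E2, ∑ i : Fin 2, ‖diracExpr m μ (ψn n) x i‖ ^ 2) =
        c ^ 2 * (2 * Real.pi) * (∫ r in Set.Ioo (0:ℝ) 1, r * (deriv φ r) ^ 2)) ∧
    Tendsto (fun n : ℕ =>
        Real.sqrt (∫ x : E2, ∑ i : Fin 2, ‖diracExpr m μ (ψn n) x i‖ ^ 2) /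
        Real.sqrt (∫ x : E2, ∑ i : Fin 2, ‖ψn n x i‖ ^ 2))
      atTop (nhds 0) := by
  have hψsq : ∀ x, ∑ i : Fin 2, ‖ψ x i‖ ^ 2 = c ^ 2 := by
    intro x
    rw [← hnorm x, Real.sq_sqrt (by positivity)]
  have hψnfun : ∀ n : ℕ, ψn n = fun x i => (↑(φ (‖x - xseq n‖ / (n:ℝ))) : ℂ) * ψ x i := by
    intro n; funext x; exact hψn n x
  have key1 : ∀ n : ℕ, 1 ≤ n →
      (∫ x : E2, ∑ i : Fin 2, ‖ψn n x i‖ ^ 2) =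
        c ^ 2 * (n : ℝ) ^ 2 * (∫ r in Set.Ioo (0:ℝ) 1, r * φ r ^ 2) * (2 * π) := by
    intro n hn
    have hnpos : (0:ℝ) < n := by exact_mod_cast hn
    have hpt : ∀ x : E2,
        (∑ i : Fin 2, ‖ψn n x i‖ ^ 2)
          = c ^ 2 * φ (‖x - xseq n‖ / (n:ℝ)) ^ 2 := by
      intro x
      rw [hψnfun n]
      simp only [norm_mul, Complex.norm_real, Real.norm_eq_abs, mul_pow, sq_abs, ← Finset.mul_sum]
      rw [hψsq x]
      ring
    simp only [hpt]
    have h2 := radial_int (fun r => c ^ 2 * φ (r / (n:ℝ)) ^ 2) (xseq n)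
    rw [h2]
    have h3 := subst_lemma (fun r => c ^ 2 * φ r ^ 2) (n:ℝ) hnpos
    rw [h3]
    have hφc : Continuous φ := hφ.continuous
    have h4 := Ioi_to_Ioo (fun y => y * (c ^ 2 * φ y ^ 2))
      (by fun_prop) (fun r hr => by rw [hφ0 r (le_of_lt hr)]; ring)
    rw [h4]
    have h5 : ∫ y in Ioo (0:ℝ) 1, y * (c ^ 2 * φ y ^ 2)
        = c ^ 2 * ∫ y in Ioo (0:ℝ) 1, y * φ y ^ 2 := by
      rw [← integral_const_mul]
      refine integral_congr_ae (Eventually.of_forall fun y => ?_)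
      ring
    rw [h5]
    ring
  have key2 : ∀ n : ℕ, 1 ≤ n →
      (∫ x : E2, ∑ i : Fin 2, ‖diracExpr m μ (ψn n) x i‖ ^ 2) =
        c ^ 2 * (2 * π) * (∫ r in Set.Ioo (0:ℝ) 1, r * (deriv φ r) ^ 2) := by
    intro n hn
    have hnpos : (0:ℝ) < n := by exact_mod_cast hn
    have hpt : ∀ x : E2,
        (∑ i : Fin 2, ‖diracExpr m μ (ψn n) x i‖ ^ 2)
          = (deriv φ (‖x - xseq n‖ / (n:ℝ)) / (n:ℝ)) ^ 2 * c ^ 2 := by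
      intro x
      rw [hψnfun n]
      rw [dirac_cut_sq_all m μ ψ hsmooth heq φ hφ hφ1 (xseq n) (n:ℝ) hnpos x, hψsq x]
    simp only [hpt]
    have h2 := radial_int (fun r => (deriv φ (r / (n:ℝ)) / (n:ℝ)) ^ 2 * c ^ 2) (xseq n)
    rw [h2]
    have h3 := subst_lemma (fun r => (deriv φ r / (n:ℝ)) ^ 2 * c ^ 2) (n:ℝ) hnpos
    rw [h3]
    have hdc : Continuous (deriv φ) := hφ.continuous_deriv (by simp)
    have h4 := Ioi_to_Ioo (fun y => y * ((deriv φ y / (n:ℝ)) ^ 2 * c ^ 2))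
      (by fun_prop) (fun r hr => ?_)
    rotate_left
    · have hd0 : deriv φ r = 0 := by
        have hev : φ =ᶠ[nhds r] fun _ => 0 := by
          filter_upwards [Ioi_mem_nhds hr] with s hs
          exact hφ0 s (le_of_lt hs)
        rw [hev.deriv_eq, deriv_const]
      simp only [hd0]
      ring
    rw [h4]
    have h5 : ∫ y in Ioo (0:ℝ) 1, y * ((deriv φ y / (n:ℝ)) ^ 2 * c ^ 2)
        = (c ^ 2 / (n:ℝ) ^ 2) * ∫ y in Ioo (0:ℝ) 1, y * (deriv φ y) ^ 2 := by
      rw [← integral_const_mul]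
      refine integral_congr_ae (Eventually.of_forall fun y => ?_)
      field_simp
    rw [h5]
    field_simp
  refine ⟨key1, key2, ?_⟩
  set I₁ := ∫ r in Set.Ioo (0:ℝ) 1, r * φ r ^ 2 with hI₁
  set I₂ := ∫ r in Set.Ioo (0:ℝ) 1, r * (deriv φ r) ^ 2 with hI₂
  have hφc : Continuous φ := hφ.continuous
  have hIOn : IntegrableOn (fun r : ℝ => r * φ r ^ 2) (Ioo (0:ℝ) 1) :=
    (Continuous.integrableOn_Icc (by fun_prop)).mono_set Ioo_subset_Icc_self
  have hI1 : 1/8 ≤ I₁ := by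
    have hsm : ∫ r in Ioo (0:ℝ) (1/2), r * φ r ^ 2 = 1/8 := by
      rw [setIntegral_congr_fun measurableSet_Ioo
        (fun r hr => by simp only; rw [hφ1 r (le_of_lt hr.2)]; ring : EqOn (fun r : ℝ => r * φ r ^ 2) (fun r => r) (Ioo 0 (1/2)))]
      rw [← integral_Ioc_eq_integral_Ioo, ← intervalIntegral.integral_of_le (by norm_num : (0:ℝ) ≤ 1/2)]
      rw [integral_id]
      norm_num
    rw [← hsm]
    refine setIntegral_mono_set hIOn ?_ (HasSubset.Subset.eventuallyLE ?_)
    · refine (ae_restrict_iff' measurableSet_Ioo).2 (Eventually.of_forall fun r hr => ?_)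
      exact mul_nonneg hr.1.le (sq_nonneg _)
    · exact Ioo_subset_Ioo le_rfl (by norm_num)
  have hI1pos : (0:ℝ) < I₁ := lt_of_lt_of_le (by norm_num) hI1
  set A := Real.sqrt (c ^ 2 * (2 * π) * I₂) with hA
  set B := Real.sqrt (c ^ 2 * I₁ * (2 * π)) with hB
  have hBpos : 0 < B := Real.sqrt_pos.2 (by positivity)
  have hlim : Tendsto (fun n : ℕ => A / ((n:ℝ) * B)) atTop (nhds 0) := by
    have heqf : (fun n : ℕ => A / ((n:ℝ) * B)) = fun n : ℕ => (A / B) / (n:ℝ) := by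
      funext n
      rw [div_div, mul_comm]
    rw [heqf]
    exact Tendsto.div_atTop tendsto_const_nhds tendsto_natCast_atTop_atTop
  refine Tendsto.congr' ?_ hlim
  filter_upwards [eventually_ge_atTop 1] with n hn
  rw [key2 n hn, key1 n hn, ← hA]
  have : c ^ 2 * (n:ℝ) ^ 2 * I₁ * (2 * π) = (n:ℝ) ^ 2 * (c ^ 2 * I₁ * (2 * π)) := by ring
  rw [this, Real.sqrt_mul (sq_nonneg _), Real.sqrt_sq (Nat.cast_nonneg n), ← hB]

end
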